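/- arXiv:2206.13923 — 2 statements merged into one kernel-verified Lean document; each statement's English description precedes it below -/
import Mathlib

section
/- For p_1,...,p_K ∈ [0,1], the quantity ∑_{k=1}^K p_k ∏_{j≠k}(1−p_j) + ∏_{k=1}^K (1−p_k) equals 1 if and only if at most one of the p_k is nonzero (for K ≥ 2). In particular, when at least two p_k are strictly positive, the sum of SLOVA probabilities over classes and the 'none' event is strictly less than 1. -/
lemma slova_aux (K : ℕ) (p : Fin K → ℝ) (hp : ∀ k, p k ∈ Set.Icc (0:ℝ) 1)
    (s : Finset (Fin K)) :
    ((∑ k ∈ s, p k * ∏ j ∈ s.erase k, (1 - p j)) + ∏ k ∈ s, (1 - p k) ≤ 1) ∧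
    ((∑ k ∈ s, p k * ∏ j ∈ s.erase k, (1 - p j)) + ∏ k ∈ s, (1 - p k) = 1 ↔
      ∀ i ∈ s, ∀ j ∈ s, p i ≠ 0 → p j ≠ 0 → i = j) := by
  classical
  induction s using Finset.induction_on with
  | empty => simp
  | @insert a s ha ih =>
    obtain ⟨ihle, ihiff⟩ := ih
    set Q : ℝ := ∏ k ∈ s, (1 - p k) with hQdef
    set Ssum : ℝ := ∑ k ∈ s, p k * ∏ j ∈ s.erase k, (1 - p j) with hSdef
    have hpa0 : 0 ≤ p a := (hp a).1
    have hpa1 : p a ≤ 1 := (hp a).2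
    have hQ0 : 0 ≤ Q := Finset.prod_nonneg (fun j hj => by linarith [(hp j).2])
    have hQ1 : Q ≤ 1 := Finset.prod_le_one (fun j hj => by linarith [(hp j).2])
      (fun j hj => by linarith [(hp j).1])
    have hS0 : 0 ≤ Ssum := Finset.sum_nonneg (fun k hk => by
      have := (hp k).1
      have hpr : (0:ℝ) ≤ ∏ j ∈ s.erase k, (1 - p j) :=
        Finset.prod_nonneg (fun j hj => by linarith [(hp j).2])
      positivity)
    -- key identity
    have hins : (∑ k ∈ insert a s, p k * ∏ j ∈ (insert a s).erase k, (1 - p j))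
        + ∏ k ∈ insert a s, (1 - p k)
        = (1 - p a) * (Ssum + Q) + p a * Q := by
      rw [Finset.sum_insert ha, Finset.prod_insert ha, Finset.erase_insert ha]
      have hsum : ∀ k ∈ s, p k * ∏ j ∈ (insert a s).erase k, (1 - p j)
          = (1 - p a) * (p k * ∏ j ∈ s.erase k, (1 - p j)) := by
        intro k hk
        have hak : a ≠ k := fun h => ha (h ▸ hk)
        rw [Finset.erase_insert_of_ne hak,
          Finset.prod_insert (fun h => ha (Finset.mem_of_mem_erase h))]
        ring
      rw [Finset.sum_congr rfl hsum, ← Finset.mul_sum, hSdef, hQdef]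
      ring
    -- Q < 1 if some nonzero in s
    have hQlt : ∀ j ∈ s, p j ≠ 0 → Q < 1 := by
      intro j hj hjne
      have hpj : 0 < p j := lt_of_le_of_ne (hp j).1 (Ne.symm hjne)
      have hR0 : 0 ≤ ∏ k ∈ s.erase j, (1 - p k) :=
        Finset.prod_nonneg (fun k hk => by linarith [(hp k).2])
      have hR1 : (∏ k ∈ s.erase j, (1 - p k)) ≤ 1 :=
        Finset.prod_le_one (fun k hk => by linarith [(hp k).2])
          (fun k hk => by linarith [(hp k).1])
      have hfac : Q = (1 - p j) * ∏ k ∈ s.erase j, (1 - p k) :=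
        (Finset.mul_prod_erase s _ hj).symm
      have hpj1 : p j ≤ 1 := (hp j).2
      nlinarith
    constructor
    · rw [hins]; nlinarith
    · rw [hins]
      constructor
      · intro h1
        have hFs1 : Ssum + Q = 1 := by nlinarith
        have hcond := ihiff.mp hFs1
        have hpaQ : p a * (1 - Q) = 0 := by nlinarith
        intro i hi j hj hi0 hj0
        rcases Finset.mem_insert.mp hi with rfl | hi'
        · rcases Finset.mem_insert.mp hj with rfl | hj'
          · rfl
          · exact absurd hpaQ (by
              have := hQlt j hj' hj0
              have : 0 < p i * (1 - Q) := mul_pos (lt_of_le_of_ne (hp i).1 (Ne.symm hi0)) (by linarith)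
              linarith)
        · rcases Finset.mem_insert.mp hj with rfl | hj'
          · exact absurd hpaQ (by
              have := hQlt i hi' hi0
              have : 0 < p j * (1 - Q) := mul_pos (lt_of_le_of_ne (hp j).1 (Ne.symm hj0)) (by linarith)
              linarith)
          · exact hcond i hi' j hj' hi0 hj0
      · intro hcond
        have hFs1 : Ssum + Q = 1 := ihiff.mpr (fun i hi j hj hi0 hj0 =>
          hcond i (Finset.mem_insert_of_mem hi) j (Finset.mem_insert_of_mem hj) hi0 hj0)
        by_cases hpa : p a = 0
        · rw [hpa]; linarith
        · have hzero : ∀ j ∈ s, p j = 0 := by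
            intro j hj
            by_contra hjne
            have := hcond a (Finset.mem_insert_self a s) j (Finset.mem_insert_of_mem hj) hpa hjne
            exact ha (this ▸ hj)
          have hQ1' : Q = 1 := Finset.prod_eq_one (fun j hj => by rw [hzero j hj]; ring)
          have hS : Ssum = 0 := by rw [hQ1'] at hFs1; linarith
          rw [hQ1', hS]; ring

theorem slova_total_prob_eq_one_iff (K : ℕ) (hK : 2 ≤ K) (p : Fin K → ℝ)
    (hp : ∀ k, p k ∈ Set.Icc (0:ℝ) 1) :
    (((∑ k, p k * ∏ j ∈ Finset.univ.erase k, (1 - p j)) + ∏ k, (1 - p k) = 1) ↔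
      (∀ i j : Fin K, p i ≠ 0 → p j ≠ 0 → i = j)) ∧
    (∀ i j : Fin K, i ≠ j → 0 < p i → 0 < p j →
      (∑ k, p k * ∏ l ∈ Finset.univ.erase k, (1 - p l)) + ∏ k, (1 - p k) < 1) := by
  obtain ⟨hle, hiff⟩ := slova_aux K p hp Finset.univ
  constructor
  · rw [hiff]
    constructor
    · intro h i j hi hj; exact h i (Finset.mem_univ i) j (Finset.mem_univ j) hi hj
    · intro h i _ j _ hi hj; exact h i j hi hj
  · intro i j hij hi hj
    refine lt_of_le_of_ne hle (fun h1 => ?_)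
    exact hij (hiff.mp h1 i (Finset.mem_univ i) j (Finset.mem_univ j) hi.ne' hj.ne')
end

section
/- Let f : ℝ^D → ℝ^K be a continuous piecewise affine function with finitely many affine pieces whose domains are polytopes covering ℝ^D. Then for every x ∈ ℝ^D there exist an index t, a matrix V, a vector a, and β > 0 such that f(αx) = V(αx) + a for all α ≥ β. -/
theorem piecewise_affine_ray_eventually_affine (D K R : ℕ)
    (f : (Fin D → ℝ) → (Fin K → ℝ)) (hf : Continuous f)
    (Q : Fin R → Set (Fin D → ℝ))
    (hQconv : ∀ l, Convex ℝ (Q l)) (hQclosed : ∀ l, IsClosed (Q l))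
    (hQcover : (⋃ l, Q l) = Set.univ)
    (V : Fin R → Matrix (Fin K) (Fin D) ℝ) (a : Fin R → (Fin K → ℝ))
    (haff : ∀ l, ∀ z ∈ Q l, f z = (V l).mulVec z + a l) :
    ∀ x : Fin D → ℝ, ∃ (W : Matrix (Fin K) (Fin D) ℝ) (b : Fin K → ℝ) (β : ℝ),
      0 < β ∧ ∀ α : ℝ, β ≤ α → f (α • x) = W.mulVec (α • x) + b := by
  intro x
  -- T l : set of parameters α with α • x ∈ Q l
  set T : Fin R → Set ℝ := fun l => {α : ℝ | α • x ∈ Q l} with hT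
  have hTconv : ∀ l, Convex ℝ (T l) := by
    intro l
    have := (hQconv l).linear_preimage (LinearMap.toSpanSingleton ℝ (Fin D → ℝ) x)
    simpa [T, LinearMap.toSpanSingleton, Set.preimage] using this
  -- Some T l is unbounded above
  have hmem : ∀ α : ℝ, ∃ l, α ∈ T l := by
    intro α
    have : α • x ∈ ⋃ l, Q l := by rw [hQcover]; trivial
    simpa [T] using this
  have hunb : ∃ l, ∀ M : ℝ, ∃ α, M ≤ α ∧ α ∈ T l := by
    by_contra h
    push_neg at h
    choose M hM using h
    obtain ⟨M₀, hM₀⟩ := Finite.exists_le M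
    obtain ⟨l, hl⟩ := hmem (M₀ + 1)
    exact absurd hl (hM l (M₀ + 1) (by linarith [hM₀ l]))
  obtain ⟨l, hl⟩ := hunb
  obtain ⟨β₀, hβ₀ge, hβ₀mem⟩ := hl 1
  refine ⟨V l, a l, β₀, by linarith, ?_⟩
  intro α hα
  have hαmem : α ∈ T l := by
    obtain ⟨γ, hγge, hγmem⟩ := hl α
    have hoc := (hTconv l).ordConnected
    exact hoc.out hβ₀mem hγmem ⟨hα, hγge⟩
  exact haff l (α • x) hαmem
end
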